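/- The average Lagrangian cost under the stationary distribution equals the closed-form expression of Theorem 3 in the constant-distortion case: Σ_{Δ=1}^{k−1} Δ·z_Δ + Σ_{Δ=k}^{∞} (Δ + E)·z_Δ = ((1−B)/(B + k(1−B))) · (k(k−1)/2 + (E+k)/(1−B) + B/(1−B)²), where both series converge. -/

import Mathlib

/-!
On the tail `Δ = k + n` the stationary weights are `z₁ Bⁿ`, so the tail cost is
`z₁ ∑ (k + E + n) Bⁿ`, a geometric series plus its derivative series; the head is `z₁` times
the Gauss sum `1 + ⋯ + (k - 1)`. Finally `z₁ = (1 - B) / (B + k (1 - B))`.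
-/

open Finset

theorem hasSum_add_coe_mul_geometric_of_norm_lt_one {𝕜 : Type*} [NormedField 𝕜]
    [CompleteSpace 𝕜] (a : 𝕜) {r : 𝕜} (hr : ‖r‖ < 1) :
    HasSum (fun n : ℕ ↦ (a + n) * r ^ n) (a / (1 - r) + r / (1 - r) ^ 2) := by
  simpa only [add_mul, div_eq_mul_inv] using
    ((hasSum_geometric_of_norm_lt_one hr).mul_left a).add
      (hasSum_coe_mul_geometric_of_norm_lt_one hr)

theorem sum_Icc_one_cast {K : Type*} [Field K] [CharZero K] (n : ℕ) :
    ∑ i ∈ Icc 1 n, (i : K) = n * (n + 1) / 2 := by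
  induction n with
  | zero => simp
  | succ n ih =>
    rw [sum_Icc_succ_top (by omega), ih]
    push_cast
    ring

/-- Also valid at `k = 0`, where `k - 1` truncates to `0` in `ℕ` but not in `K`. -/
theorem sum_Icc_one_sub_one_cast {K : Type*} [Field K] [CharZero K] (k : ℕ) :
    ∑ i ∈ Icc 1 (k - 1), (i : K) = k * (k - 1) / 2 := by
  cases k with
  | zero => simp
  | succ n =>
    rw [Nat.add_sub_cancel, sum_Icc_one_cast]
    push_cast
    ring

theorem inv_sub_one_add_one_div_one_sub {K : Type*} [Field K] (a : K) {b : K} (hb : b ≠ 1) :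
    (a - 1 + 1 / (1 - b))⁻¹ = (1 - b) / (b + a * (1 - b)) := by
  rw [← inv_div]
  field_simp [sub_ne_zero.mpr hb.symm]
  ring

theorem average_lagrangian_cost (k : ℕ) (B E : ℝ) (hB0 : 0 ≤ B)
    (hB1 : B < 1)
    (z : ℕ → ℝ)
    (hz1 : ∀ Δ : ℕ, 1 ≤ Δ → Δ ≤ k → z Δ = ((k : ℝ) - 1 + 1 / (1 - B))⁻¹)
    (hz2 : ∀ Δ : ℕ, k ≤ Δ → z Δ = ((k : ℝ) - 1 + 1 / (1 - B))⁻¹ * B ^ (Δ - k)) :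
    ∃ S : ℝ,
      HasSum (fun n : ℕ => (((k + n : ℕ) : ℝ) + E) * z (k + n)) S ∧
      (∑ Δ ∈ Finset.Icc 1 (k - 1), (Δ : ℝ) * z Δ) + S =
        ((1 - B) / (B + k * (1 - B))) *
          ((k : ℝ) * (k - 1) / 2 + (E + k) / (1 - B) + B / (1 - B) ^ 2) := by
  set z₁ : ℝ := ((k : ℝ) - 1 + 1 / (1 - B))⁻¹
  have hB : ‖B‖ < 1 := by rwa [Real.norm_of_nonneg hB0]
  have tail : (fun n : ℕ => (((k + n : ℕ) : ℝ) + E) * z (k + n)) =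
      fun n : ℕ => z₁ * ((k + E + n) * B ^ n) := by
    funext n
    rw [hz2 (k + n) (Nat.le_add_right k n), Nat.add_sub_cancel_left]
    push_cast
    ring
  have head : ∑ Δ ∈ Icc 1 (k - 1), (Δ : ℝ) * z Δ = (∑ Δ ∈ Icc 1 (k - 1), (Δ : ℝ)) * z₁ := by
    rw [sum_mul]
    refine sum_congr rfl fun Δ hΔ ↦ ?_
    rw [mem_Icc] at hΔ
    rw [hz1 Δ hΔ.1 (hΔ.2.trans (Nat.sub_le k 1))]
  refine ⟨_, tail ▸ (hasSum_add_coe_mul_geometric_of_norm_lt_one _ hB).mul_left z₁, ?_⟩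
  have hz₁ : z₁ = (1 - B) / (B + k * (1 - B)) := inv_sub_one_add_one_div_one_sub _ hB1.ne
  rw [head, sum_Icc_one_sub_one_cast, hz₁]
  ring
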